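/- arXiv:2307.08868 — 2 statements merged into one kernel-verified Lean document; each statement's English description precedes it below -/
import Mathlib

section
/- Let n ≥ 2, let (θ_{i,j})_{i,j≥1} be a coagulation kernel, and let f^n = (f_i^n)_{1≤i≤n} : I_max → ℝ^n be the unique maximal local solution of the truncated RBK system. If all components f_i^{n,in} of the initial datum are nonnegative, then all components f_i^n(t) of the solution are nonnegative for every t ∈ I_max, and moreover sup I_max = +∞, i.e. the solution is global in forward time. -/
/-!
Clamping every coordinate to `[0, M]` turns the quadratic RBK field into a bounded, globally
Lipschitz one, so the clamped system has a solution on `[0, ∞)`. This solution stays nonnegative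
because the field is quasi-positive (when `x_i = 0` the loss term of `x_i'` vanishes and the gain
term is nonnegative), and its mass `∑ x_i` does not increase since every gain term is dominated by
a loss term. For `M` the initial mass the clamp is therefore never active, which gives a global
solution of the true system. The RBK field is polynomial, hence locally Lipschitz, so by uniqueness
every local solution agrees with it in forward time.
-/

open MeasureTheory Finset Filter

/-- `IsTruncRBKOn θ n I f` : the family `(f i)_{1 ≤ i ≤ n}` solves the truncated
Redner–Ben-Avraham–Kahng coagulation system of size `n` with kernel `θ` on the set `I`:
`df_i/dt = ∑_{j=1}^{n-i} θ_{i+j,j} f_{i+j} f_j − ∑_{j=1}^{n} θ_{i,j} f_i f_j`. -/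
def IsTruncRBKOn (θ : ℕ → ℕ → ℝ) (n : ℕ) (I : Set ℝ) (f : ℕ → ℝ → ℝ) : Prop :=
  ∀ i ∈ Finset.Icc 1 n, ∀ t ∈ I,
    HasDerivWithinAt (f i)
      ((∑ j ∈ Finset.Icc 1 (n - i), θ (i + j) j * f (i + j) t * f j t)
        - ∑ j ∈ Finset.Icc 1 n, θ i j * f i t * f j t) I t

open Set Metric Topology

section ODE

variable {E : Type*} [NormedAddCommGroup E] [NormedSpace ℝ E]

theorem ODE_solution_unique_of_mem_Icc_of_lipschitzOnWith {v : E → E} {s : Set E} {K : NNReal}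
    (hv : LipschitzOnWith K v s) {f g : ℝ → E} {a b : ℝ}
    (hf : ∀ t ∈ Icc a b, HasDerivWithinAt f (v (f t)) (Icc a b) t)
    (hfs : ∀ t ∈ Icc a b, f t ∈ s)
    (hg : ∀ t ∈ Icc a b, HasDerivWithinAt g (v (g t)) (Icc a b) t)
    (hgs : ∀ t ∈ Icc a b, g t ∈ s)
    (ha : f a = g a) : EqOn f g (Icc a b) := by
  have right_deriv : ∀ {φ : ℝ → E},
      (∀ t ∈ Icc a b, HasDerivWithinAt φ (v (φ t)) (Icc a b) t) →
      ∀ t ∈ Ico a b, HasDerivWithinAt φ (v (φ t)) (Ici t) t := fun hφ t ht =>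
    (hφ t (Ico_subset_Icc_self ht)).mono_of_mem_nhdsWithin (Icc_mem_nhdsGE_of_mem ht)
  exact ODE_solution_unique_of_mem_Icc_right (fun _ _ => hv)
    (fun t ht => (hf t ht).continuousWithinAt) (right_deriv hf)
    (fun t ht => hfs t (Ico_subset_Icc_self ht))
    (fun t ht => (hg t ht).continuousWithinAt) (right_deriv hg)
    (fun t ht => hgs t (Ico_subset_Icc_self ht)) ha

theorem ODE_solution_unique_of_mem_Icc_of_locallyLipschitz [ProperSpace E] {v : E → E}
    (hv : LocallyLipschitz v) {f g : ℝ → E} {a b : ℝ}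
    (hf : ∀ t ∈ Icc a b, HasDerivWithinAt f (v (f t)) (Icc a b) t)
    (hg : ∀ t ∈ Icc a b, HasDerivWithinAt g (v (g t)) (Icc a b) t)
    (ha : f a = g a) : EqOn f g (Icc a b) := by
  obtain ⟨Cf, hCf⟩ := isCompact_Icc.exists_bound_of_continuousOn
    fun t ht => (hf t ht).continuousWithinAt
  obtain ⟨Cg, hCg⟩ := isCompact_Icc.exists_bound_of_continuousOn
    fun t ht => (hg t ht).continuousWithinAt
  obtain ⟨K, hK⟩ := hv.locallyLipschitzOn.exists_lipschitzOnWith_of_compact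
    (isCompact_closedBall (0 : E) (max Cf Cg))
  exact ODE_solution_unique_of_mem_Icc_of_lipschitzOnWith hK
    hf (fun t ht => mem_closedBall_zero_iff.2 ((hCf t ht).trans (le_max_left _ _)))
    hg (fun t ht => mem_closedBall_zero_iff.2 ((hCg t ht).trans (le_max_right _ _))) ha

theorem exists_forall_hasDerivWithinAt_Ici_of_lipschitzWith [CompleteSpace E] {v : E → E}
    {K : NNReal} (hv : LipschitzWith K v) {C : NNReal} (hC : ∀ x, ‖v x‖ ≤ C) (x₀ : E) :
    ∃ g : ℝ → E, g 0 = x₀ ∧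
      ∀ t ∈ Ici (0 : ℝ), HasDerivWithinAt g (v (g t)) (Ici 0) t := by
  have local_sol (m : ℕ) : ∃ y : ℝ → E, y 0 = x₀ ∧
      ∀ t ∈ Icc (0 : ℝ) (m + 1), HasDerivWithinAt y (v (y t)) (Icc 0 (m + 1)) t :=
    IsPicardLindelof.exists_eq_forall_mem_Icc_hasDerivWithinAt₀ <|
      .of_time_independent (tmin := 0) (tmax := m + 1) (t₀ := ⟨0, le_rfl, by positivity⟩)
        (a := C * (m + 1 : NNReal)) (r := 0) (fun x _ => hC x) hv.lipschitzOnWith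
        (by simp [max_eq_left (Nat.cast_add_one_pos m).le])
  choose y hy0 hy using local_sol
  have agree {m k : ℕ} (hmk : m ≤ k) : EqOn (y m) (y k) (Icc 0 (m + 1)) := by
    have hsub : Icc (0 : ℝ) (m + 1) ⊆ Icc 0 (k + 1) := Icc_subset_Icc_right (by gcongr)
    exact ODE_solution_unique_of_mem_Icc_of_lipschitzOnWith (s := univ) hv.lipschitzOnWith
      (hy m) (fun _ _ => trivial) (fun t ht => (hy k t (hsub ht)).mono hsub) (fun _ _ => trivial)
      ((hy0 m).trans (hy0 k).symm)
  refine ⟨fun t => y ⌊t⌋₊ t, by simpa using hy0 0, fun t ht => ?_⟩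
  have hlt : t < ⌊t⌋₊ + 1 := Nat.lt_floor_add_one t
  have hnhds : Icc (0 : ℝ) (⌊t⌋₊ + 1) ∈ 𝓝[Ici 0] t := by
    rw [← Ici_inter_Iic]; exact inter_mem_nhdsWithin _ (Iic_mem_nhds hlt)
  have heq : (fun s => y ⌊s⌋₊ s) =ᶠ[𝓝[Ici 0] t] y ⌊t⌋₊ := by
    filter_upwards [hnhds] with s hs
    rcases le_total ⌊s⌋₊ ⌊t⌋₊ with h | h
    · exact agree h ⟨hs.1, (Nat.lt_floor_add_one s).le⟩
    · exact (agree h hs).symm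
  exact ((hy _ t ⟨ht, hlt.le⟩).mono_of_mem_nhdsWithin hnhds).congr_of_eventuallyEq heq rfl

end ODE

theorem nonneg_of_hasDerivWithinAt_Ici_of_neg {h h' : ℝ → ℝ} {a : ℝ}
    (hd : ∀ t ∈ Ici a, HasDerivWithinAt h (h' t) (Ici a) t)
    (hneg : ∀ t ∈ Ici a, h t < 0 → 0 ≤ h' t) (ha : 0 ≤ h a) {b : ℝ} (hab : a ≤ b) :
    0 ≤ h b := by
  by_contra! hb
  have hc : ContinuousOn h (Icc a b) := fun s hs =>
    (hd s hs.1).continuousWithinAt.mono Icc_subset_Ici_self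
  set A := Icc a b ∩ h ⁻¹' Ici 0
  have hbdd : BddAbove A := ⟨b, fun s hs => hs.1.2⟩
  have hτ : sSup A ∈ A := (hc.preimage_isClosed_of_isClosed isClosed_Icc isClosed_Ici).csSup_mem
    ⟨a, left_mem_Icc.2 hab, ha⟩ hbdd
  have hτb : sSup A < b := hτ.1.2.lt_of_ne fun h => by rw [h] at hτ; exact hb.not_ge hτ.2
  have hneg_after : ∀ s ∈ Ioo (sSup A) b, h s < 0 := fun s hs =>
    not_le.1 fun h0 => hs.1.not_ge (le_csSup hbdd ⟨⟨hτ.1.1.trans hs.1.le, hs.2.le⟩, h0⟩)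
  have hmono : MonotoneOn h (Icc (sSup A) b) := by
    refine monotoneOn_of_hasDerivWithinAt_nonneg (f' := h') (convex_Icc _ _)
      (hc.mono (Icc_subset_Icc_left hτ.1.1)) (fun s hs => ?_) (fun s hs => ?_) <;>
      rw [interior_Icc] at hs <;> have hs' : a < s := hτ.1.1.trans_lt hs.1
    · exact ((hd s hs'.le).hasDerivAt (Ici_mem_nhds hs')).hasDerivWithinAt
    · exact hneg s hs'.le (hneg_after s hs)
  exact hb.not_ge (hτ.2.trans (hmono (left_mem_Icc.2 hτb.le) (right_mem_Icc.2 hτb.le) hτb.le))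

section Clamp

variable {ι : Type*}

def clampBox (M : ℝ) (x : ι → ℝ) : ι → ℝ := fun i => max 0 (min M (x i))

theorem lipschitzWith_clampBox [Fintype ι] (M : ℝ) : LipschitzWith 1 (clampBox (ι := ι) M) :=
  LipschitzWith.of_dist_le_mul fun x y => by
    rw [NNReal.coe_one, one_mul]
    refine (dist_pi_le_iff dist_nonneg).2 fun i => ?_
    exact (((LipschitzWith.id.const_min M).const_max 0).dist_le_mul (x i) (y i)).trans
      (by simpa using dist_le_pi_dist x y i)

theorem clampBox_nonneg (M : ℝ) (x : ι → ℝ) : 0 ≤ clampBox M x := fun _ => le_max_left _ _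

theorem clampBox_mem_closedBall [Fintype ι] {M : ℝ} (hM : 0 ≤ M) (x : ι → ℝ) :
    clampBox M x ∈ closedBall 0 M := by
  refine mem_closedBall_zero_iff.2 ((pi_norm_le_iff_of_nonneg hM).2 fun i => ?_)
  rw [Real.norm_of_nonneg (clampBox_nonneg M x i)]
  exact max_le hM (min_le_left _ _)

theorem clampBox_apply_eq_zero {M : ℝ} {x : ι → ℝ} {i : ι} (hi : x i ≤ 0) :
    clampBox M x i = 0 :=
  max_eq_left (min_le_of_right_le hi)

theorem clampBox_eq_self {M : ℝ} {x : ι → ℝ} (h0 : 0 ≤ x) (hM : ∀ i, x i ≤ M) :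
    clampBox M x = x :=
  funext fun i => by
    rw [clampBox, min_eq_right (hM i), max_eq_right (show (0 : ℝ) ≤ x i from h0 i)]

end Clamp

section TruncRBK

variable {θ : ℕ → ℕ → ℝ} {n : ℕ}

variable (θ n) in
def truncRBKRhs (u : ℕ → ℝ) (i : ℕ) : ℝ :=
  (∑ j ∈ Finset.Icc 1 (n - i), θ (i + j) j * u (i + j) * u j)
    - ∑ j ∈ Finset.Icc 1 n, θ i j * u i * u j

theorem truncRBKRhs_congr {u w : ℕ → ℝ} (h : ∀ k ∈ Finset.Icc 1 n, u k = w k) {i : ℕ}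
    (hi : i ∈ Finset.Icc 1 n) : truncRBKRhs θ n u i = truncRBKRhs θ n w i := by
  simp only [Finset.mem_Icc] at h hi
  unfold truncRBKRhs
  congr 1 <;> refine Finset.sum_congr rfl fun j hj => ?_ <;> rw [Finset.mem_Icc] at hj
  · rw [h (i + j) (by omega), h j (by omega)]
  · rw [h i hi, h j hj]

theorem truncRBKRhs_nonneg_of_eq_zero (hθ : ∀ i j : ℕ, 1 ≤ i → 1 ≤ j → 0 ≤ θ i j)
    {u : ℕ → ℝ} (hu : ∀ k, 0 ≤ u k) {i : ℕ} (hi : 1 ≤ i) (hui : u i = 0) :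
    0 ≤ truncRBKRhs θ n u i := by
  simp only [truncRBKRhs, hui, mul_zero, zero_mul, Finset.sum_const_zero, sub_zero]
  refine Finset.sum_nonneg fun j hj => ?_
  have hj1 := (Finset.mem_Icc.1 hj).1
  exact mul_nonneg (mul_nonneg (hθ _ _ (by omega) hj1) (hu _)) (hu _)

/-- Every gain term `θ (i + j) j u (i + j) u j` is also a loss term of the species `i + j`. -/
theorem sum_truncRBKRhs_nonpos (hθ : ∀ i j : ℕ, 1 ≤ i → 1 ≤ j → 0 ≤ θ i j)
    {u : ℕ → ℝ} (hu : ∀ k, 0 ≤ u k) :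
    ∑ i ∈ Finset.Icc 1 n, truncRBKRhs θ n u i ≤ 0 := by
  have gain_le_loss :
      ∑ i ∈ Finset.Icc 1 n, ∑ j ∈ Finset.Icc 1 (n - i), θ (i + j) j * u (i + j) * u j
        ≤ ∑ i ∈ Finset.Icc 1 n, ∑ j ∈ Finset.Icc 1 n, θ i j * u i * u j := by
    calc _ = ∑ j ∈ Finset.Icc 1 n, ∑ i ∈ Finset.Icc 1 (n - j),
          θ (i + j) j * u (i + j) * u j :=
          Finset.sum_comm' fun i j => by simp only [Finset.mem_Icc]; omega
      _ = ∑ j ∈ Finset.Icc 1 n, ∑ k ∈ Finset.Icc (1 + j) n, θ k j * u k * u j := by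
          refine Finset.sum_congr rfl fun j hj => ?_
          rw [← Nat.sub_add_cancel (Finset.mem_Icc.1 hj).2, Nat.add_sub_cancel,
            ← Finset.map_add_right_Icc, Finset.sum_map]
          rfl
      _ ≤ ∑ j ∈ Finset.Icc 1 n, ∑ k ∈ Finset.Icc 1 n, θ k j * u k * u j := by
          refine Finset.sum_le_sum fun j hj => Finset.sum_le_sum_of_subset_of_nonneg
            (Finset.Icc_subset_Icc_left (by omega)) fun k hk _ => ?_
          exact mul_nonneg (mul_nonneg (hθ _ _ (Finset.mem_Icc.1 hk).1 (Finset.mem_Icc.1 hj).1)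
            (hu _)) (hu _)
      _ = _ := Finset.sum_comm
  simpa only [truncRBKRhs, Finset.sum_sub_distrib, sub_nonpos] using gain_le_loss

def toSeq (x : Finset.Icc 1 n → ℝ) (k : ℕ) : ℝ :=
  if hk : k ∈ Finset.Icc 1 n then x ⟨k, hk⟩ else 0

@[simp]
theorem toSeq_coe (x : Finset.Icc 1 n → ℝ) (i : Finset.Icc 1 n) : toSeq x i = x i :=
  dif_pos i.2

theorem toSeq_nonneg {x : Finset.Icc 1 n → ℝ} (hx : 0 ≤ x) (k : ℕ) : 0 ≤ toSeq x k := by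
  unfold toSeq
  split
  exacts [hx _, le_rfl]

theorem contDiff_toSeq {m : WithTop ℕ∞} (k : ℕ) :
    ContDiff ℝ m fun x : Finset.Icc 1 n → ℝ => toSeq x k := by
  unfold toSeq
  split
  exacts [contDiff_apply ℝ ℝ _, contDiff_const]

variable (θ n) in
def truncRBKField (x : Finset.Icc 1 n → ℝ) : Finset.Icc 1 n → ℝ :=
  fun i => truncRBKRhs θ n (toSeq x) i

theorem contDiff_truncRBKField : ContDiff ℝ 1 (truncRBKField θ n) := by
  refine contDiff_pi.2 fun i => ?_
  unfold truncRBKField truncRBKRhs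
  refine .sub (.sum fun j _ => ?_) (.sum fun j _ => ?_) <;>
    exact (contDiff_const.mul (contDiff_toSeq _)).mul (contDiff_toSeq _)

theorem isTruncRBKOn_iff {I : Set ℝ} {f : ℕ → ℝ → ℝ} :
    IsTruncRBKOn θ n I f ↔ ∀ t ∈ I,
      HasDerivWithinAt (fun s (i : Finset.Icc 1 n) => f i s)
        (truncRBKField θ n fun i => f i t) I t := by
  have hfield (t : ℝ) (i : Finset.Icc 1 n) :
      truncRBKField θ n (fun i => f i t) i = truncRBKRhs θ n (f · t) i :=
    truncRBKRhs_congr (u := toSeq fun i => f i t) (fun k hk => by rw [toSeq, dif_pos hk]) i.2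
  simp only [hasDerivWithinAt_pi, hfield, Subtype.forall]
  exact ⟨fun h t ht i hi => h i hi t ht, fun h i hi t ht => h t ht i hi⟩

theorem truncRBKField_nonneg_of_eq_zero (hθ : ∀ i j : ℕ, 1 ≤ i → 1 ≤ j → 0 ≤ θ i j)
    {x : Finset.Icc 1 n → ℝ} (hx : 0 ≤ x) {i : Finset.Icc 1 n} (hi : x i = 0) :
    0 ≤ truncRBKField θ n x i :=
  truncRBKRhs_nonneg_of_eq_zero hθ (toSeq_nonneg hx) (Finset.mem_Icc.1 i.2).1
    ((toSeq_coe x i).trans hi)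

theorem sum_truncRBKField_nonpos (hθ : ∀ i j : ℕ, 1 ≤ i → 1 ≤ j → 0 ≤ θ i j)
    {x : Finset.Icc 1 n → ℝ} (hx : 0 ≤ x) : ∑ i, truncRBKField θ n x i ≤ 0 :=
  (Finset.sum_coe_sort _ (truncRBKRhs θ n (toSeq x))).trans_le
    (sum_truncRBKRhs_nonpos hθ (toSeq_nonneg hx))

end TruncRBK

section GlobalSolution

variable {θ : ℕ → ℕ → ℝ} {n : ℕ}

theorem exists_solution_truncRBKField_comp_clampBox {M : ℝ} (hM : 0 ≤ M)
    (x₀ : Finset.Icc 1 n → ℝ) :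
    ∃ g : ℝ → Finset.Icc 1 n → ℝ, g 0 = x₀ ∧ ∀ t ∈ Ici (0 : ℝ),
      HasDerivWithinAt g (truncRBKField θ n (clampBox M (g t))) (Ici 0) t := by
  have hball := isCompact_closedBall (0 : Finset.Icc 1 n → ℝ) M
  obtain ⟨K, hK⟩ := (contDiff_truncRBKField (θ := θ)).locallyLipschitz.locallyLipschitzOn
    |>.exists_lipschitzOnWith_of_compact hball
  obtain ⟨C, hC⟩ := hball.exists_bound_of_continuousOn
    (contDiff_truncRBKField (θ := θ)).continuous.continuousOn
  have hmaps : MapsTo (clampBox (ι := Finset.Icc 1 n) M) univ (closedBall 0 M) :=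
    fun x _ => clampBox_mem_closedBall hM x
  exact exists_forall_hasDerivWithinAt_Ici_of_lipschitzWith
    (lipschitzOnWith_univ.1 (hK.comp (lipschitzWith_clampBox M).lipschitzOnWith hmaps))
    (C := C.toNNReal) (fun x => (hC _ (clampBox_mem_closedBall hM x)).trans C.le_coe_toNNReal) x₀

/-- With `M` the initial mass, the clamp never acts: the solution stays nonnegative by
quasi-positivity, and below `M` because its mass does not increase. -/
theorem exists_global_nonneg_solution_truncRBKField
    (hθ : ∀ i j : ℕ, 1 ≤ i → 1 ≤ j → 0 ≤ θ i j) {x₀ : Finset.Icc 1 n → ℝ} (hx₀ : 0 ≤ x₀) :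
    ∃ g : ℝ → Finset.Icc 1 n → ℝ, g 0 = x₀ ∧ ∀ t ∈ Ici (0 : ℝ),
      HasDerivWithinAt g (truncRBKField θ n (g t)) (Ici 0) t ∧ 0 ≤ g t := by
  set M := ∑ i, x₀ i
  obtain ⟨g, hg0, hg⟩ :=
    exists_solution_truncRBKField_comp_clampBox (θ := θ)
      (Finset.sum_nonneg fun i _ => hx₀ i) x₀
  have hg_nonneg : ∀ t ∈ Ici (0 : ℝ), 0 ≤ g t := fun t ht i =>
    nonneg_of_hasDerivWithinAt_Ici_of_neg (fun s hs => hasDerivWithinAt_pi.1 (hg s hs) i)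
      (fun s _ hs => truncRBKField_nonneg_of_eq_zero hθ (clampBox_nonneg M _)
        (clampBox_apply_eq_zero hs.le))
      (by rw [hg0]; exact hx₀ i) ht
  have hmass_deriv : ∀ t ∈ Ici (0 : ℝ), HasDerivWithinAt (fun t => ∑ i, g t i)
      (∑ i, truncRBKField θ n (clampBox M (g t)) i) (Ici 0) t := fun t ht =>
    HasDerivWithinAt.fun_sum fun i _ => hasDerivWithinAt_pi.1 (hg t ht) i
  have hmass : AntitoneOn (fun t => ∑ i, g t i) (Ici 0) := by
    refine antitoneOn_of_hasDerivWithinAt_nonpos (convex_Ici 0)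
      (f' := fun t => ∑ i, truncRBKField θ n (clampBox M (g t)) i)
      (fun t ht => (hmass_deriv t ht).continuousWithinAt) (fun t ht => ?_)
      (fun t _ => sum_truncRBKField_nonpos hθ (clampBox_nonneg M _))
    rw [interior_Ici] at ht ⊢
    exact (hmass_deriv t (mem_Ici_of_Ioi ht)).mono Ioi_subset_Ici_self
  have hclamp : ∀ t ∈ Ici (0 : ℝ), clampBox M (g t) = g t := fun t ht =>
    clampBox_eq_self (hg_nonneg t ht) fun i =>
      (Finset.single_le_sum (fun j _ => hg_nonneg t ht j) (Finset.mem_univ i)).trans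
        (by simpa only [hg0] using hmass self_mem_Ici ht ht)
  exact ⟨g, hg0, fun t ht => ⟨hclamp t ht ▸ hg t ht, hg_nonneg t ht⟩⟩

end GlobalSolution

theorem truncRBK_nonneg_and_global_general
    (θ : ℕ → ℕ → ℝ)
    (hθ_nonneg : ∀ i j : ℕ, 1 ≤ i → 1 ≤ j → 0 ≤ θ i j)
    (n : ℕ)
    (fin : ℕ → ℝ) (hfin : ∀ i ∈ Finset.Icc 1 n, 0 ≤ fin i) :
    -- (ii) any local solution with this initial datum has nonnegative components
    -- at all nonnegative times of its interval of existence
    (∀ I : Set ℝ, I.OrdConnected → (0:ℝ) ∈ I →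
      ∀ f : ℕ → ℝ → ℝ, IsTruncRBKOn θ n I f →
        (∀ i ∈ Finset.Icc 1 n, f i 0 = fin i) →
        ∀ i ∈ Finset.Icc 1 n, ∀ t ∈ I, 0 ≤ t → 0 ≤ f i t)
    -- (iii) sup I_max = +∞ : the solution extends to a global solution on [0,∞)
    ∧ ∃ f : ℕ → ℝ → ℝ, IsTruncRBKOn θ n (Set.Ici 0) f
        ∧ (∀ i ∈ Finset.Icc 1 n, f i 0 = fin i) := by
  obtain ⟨g, hg0, hg⟩ := exists_global_nonneg_solution_truncRBKField hθ_nonneg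
    (x₀ := fun i : Finset.Icc 1 n => fin i) fun i => hfin i i.2
  refine ⟨fun I hI hI0 f hf hf0 i hi t htI ht => ?_,
    fun k t => toSeq (g t) k, ?_, fun i hi => ?_⟩
  · have hsub : Icc 0 t ⊆ I := hI.out hI0 htI
    have hfg := ODE_solution_unique_of_mem_Icc_of_locallyLipschitz
      contDiff_truncRBKField.locallyLipschitz
      (fun s hs => (isTruncRBKOn_iff.1 hf s (hsub hs)).mono hsub)
      (fun s hs => (hg s hs.1).1.mono Icc_subset_Ici_self)
      (funext fun i => (hf0 i i.2).trans (congrFun hg0 i).symm)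
    have hfi : f i t = g t ⟨i, hi⟩ := congrFun (hfg ⟨ht, le_rfl⟩) ⟨i, hi⟩
    exact hfi ▸ (hg t ht).2 ⟨i, hi⟩
  · rw [isTruncRBKOn_iff]
    simpa only [toSeq_coe] using fun t ht => (hg t ht).1
  · simp [toSeq, hi, hg0]

/-- If the initial datum of the truncated RBK system is nonnegative, then
every (local) solution stays componentwise nonnegative in forward time, and the maximal
solution is global in forward time, i.e. there is a solution defined on all of `[0,∞)`. -/
theorem truncRBK_nonneg_and_global
    (θ : ℕ → ℕ → ℝ)
    (hθ_nonneg : ∀ i j : ℕ, 1 ≤ i → 1 ≤ j → 0 ≤ θ i j)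
    (hθ_symm : ∀ i j : ℕ, 1 ≤ i → 1 ≤ j → θ i j = θ j i)
    (n : ℕ) (hn : 2 ≤ n)
    (fin : ℕ → ℝ) (hfin : ∀ i ∈ Finset.Icc 1 n, 0 ≤ fin i) :
    -- (ii) any local solution with this initial datum has nonnegative components
    -- at all nonnegative times of its interval of existence
    (∀ I : Set ℝ, I.OrdConnected → (0:ℝ) ∈ I →
      ∀ f : ℕ → ℝ → ℝ, IsTruncRBKOn θ n I f →
        (∀ i ∈ Finset.Icc 1 n, f i 0 = fin i) →
        ∀ i ∈ Finset.Icc 1 n, ∀ t ∈ I, 0 ≤ t → 0 ≤ f i t)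
    -- (iii) sup I_max = +∞ : the solution extends to a global solution on [0,∞)
    ∧ ∃ f : ℕ → ℝ → ℝ, IsTruncRBKOn θ n (Set.Ici 0) f
        ∧ (∀ i ∈ Finset.Icc 1 n, f i 0 = fin i) :=
  truncRBK_nonneg_and_global_general θ hθ_nonneg n fin hfin
end

section
/- Let n ≥ 2, let (θ_{i,j})_{i,j≥1} be a coagulation kernel satisfying (K1), and let f^n = (f_i^n)_{1≤i≤n} be the nonnegative global solution of the truncated RBK system with nonnegative initial data. Then for every t ∈ [0,∞), Σ_{i=1}^{n} f_i^n(t) + (1/2) ∫_0^t ( Σ_{i=1}^{n} ω_i f_i^n(s) )^2 ds ≤ Σ_{i=1}^{n} f_i^{n,in}. -/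
/-!
Summing the equations, the gain terms count each pair `j < k` once while the loss terms count
every ordered pair `(i, j)`; by symmetry and nonnegativity the total mass therefore decreases at
least at rate `½ ∑ᵢ ∑ⱼ θᵢⱼ fᵢ fⱼ`, and under (K1) this quadratic form dominates `(∑ᵢ ωᵢ fᵢ)²`.
Integrating the resulting differential inequality gives the estimate.
-/

open MeasureTheory Finset Filter

namespace Finset

variable {M : Type*} [AddCommMonoid M]

theorem sum_Icc_sum_Icc_tsub_eq_sum_Icc_sum_Icc_pred (n : ℕ) (F : ℕ → ℕ → M) :
    ∑ i ∈ Icc 1 n, ∑ j ∈ Icc 1 (n - i), F (i + j) j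
      = ∑ k ∈ Icc 1 n, ∑ j ∈ Icc 1 (k - 1), F k j := by
  rw [sum_sigma', sum_sigma']
  refine sum_nbij' (fun p => ⟨p.1 + p.2, p.2⟩) (fun p => ⟨p.1 - p.2, p.2⟩) ?_ ?_ ?_ ?_
    fun _ _ => rfl <;>
  · rintro ⟨a, b⟩ hab
    simp only [mem_sigma, mem_Icc] at hab ⊢
    first | omega | (congr 1; omega)

theorem sum_Icc_sum_Icc_pred_add_self_le [PartialOrder M] [IsOrderedAddMonoid M]
    (n : ℕ) (G : ℕ → ℕ → M) (hG_symm : ∀ i ∈ Icc 1 n, ∀ j ∈ Icc 1 n, G i j = G j i)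
    (hG_nonneg : ∀ i ∈ Icc 1 n, ∀ j ∈ Icc 1 n, 0 ≤ G i j) :
    (∑ k ∈ Icc 1 n, ∑ j ∈ Icc 1 (k - 1), G k j) + ∑ k ∈ Icc 1 n, ∑ j ∈ Icc 1 (k - 1), G k j
      ≤ ∑ k ∈ Icc 1 n, ∑ j ∈ Icc 1 n, G k j := by
  have h_swap : ∑ k ∈ Icc 1 n, ∑ j ∈ Icc 1 (k - 1), G k j
      = ∑ k ∈ Icc 1 n, ∑ j ∈ Icc (k + 1) n, G k j := by
    rw [sum_comm' (t' := Icc 1 n) (s' := fun j => Icc (j + 1) n)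
      (fun k j => by simp only [mem_Icc]; omega)]
    refine sum_congr rfl fun j hj => sum_congr rfl fun k hk => hG_symm k ?_ j hj
    simp only [mem_Icc] at hj hk ⊢
    omega
  nth_rewrite 2 [h_swap]
  rw [← sum_add_distrib]
  refine sum_le_sum fun k hk => ?_
  rw [← sum_union (disjoint_left.2 fun j hj hj' => by simp only [mem_Icc] at hj hj'; omega)]
  refine sum_le_sum_of_subset_of_nonneg (fun j hj => ?_) fun j hj _ => hG_nonneg k hk j hj
  simp only [mem_union, mem_Icc] at hj hk ⊢
  omega

end Finset

def truncRBKRate (θ : ℕ → ℕ → ℝ) (n : ℕ) (x : ℕ → ℝ) (i : ℕ) : ℝ :=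
  (∑ j ∈ Icc 1 (n - i), θ (i + j) j * x (i + j) * x j) - ∑ j ∈ Icc 1 n, θ i j * x i * x j

section Rate

variable {θ : ℕ → ℕ → ℝ} {n : ℕ} {x : ℕ → ℝ}

theorem sum_truncRBKRate_add_half_le_zero
    (hθ_symm : ∀ i ∈ Icc 1 n, ∀ j ∈ Icc 1 n, θ i j = θ j i)
    (hθ_nonneg : ∀ i ∈ Icc 1 n, ∀ j ∈ Icc 1 n, 0 ≤ θ i j)
    (hx : ∀ i ∈ Icc 1 n, 0 ≤ x i) :
    ∑ i ∈ Icc 1 n, truncRBKRate θ n x i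
      + (1 / 2) * ∑ i ∈ Icc 1 n, ∑ j ∈ Icc 1 n, θ i j * x i * x j ≤ 0 := by
  set G : ℕ → ℕ → ℝ := fun i j => θ i j * x i * x j
  have h_gain := sum_Icc_sum_Icc_pred_add_self_le n G ?_ ?_
  · simp only [truncRBKRate, sum_sub_distrib]
    rw [sum_Icc_sum_Icc_tsub_eq_sum_Icc_sum_Icc_pred n G]
    linarith
  · intro i hi j hj
    simp only [G, hθ_symm i hi j hj]
    ring
  · intro i hi j hj
    exact mul_nonneg (mul_nonneg (hθ_nonneg i hi j hj) (hx i hi)) (hx j hj)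

theorem sq_sum_mul_le_sum_sum {ω : ℕ → ℝ}
    (hθω : ∀ i ∈ Icc 1 n, ∀ j ∈ Icc 1 n, ω i * ω j ≤ θ i j)
    (hx : ∀ i ∈ Icc 1 n, 0 ≤ x i) :
    (∑ i ∈ Icc 1 n, ω i * x i) ^ 2 ≤ ∑ i ∈ Icc 1 n, ∑ j ∈ Icc 1 n, θ i j * x i * x j := by
  rw [sq, sum_mul_sum]
  refine sum_le_sum fun i hi => sum_le_sum fun j hj => ?_
  calc ω i * x i * (ω j * x j) = ω i * ω j * x i * x j := by ring
    _ ≤ θ i j * x i * x j :=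
      mul_le_mul_of_nonneg_right (mul_le_mul_of_nonneg_right (hθω i hi j hj) (hx i hi)) (hx j hj)

theorem sum_truncRBKRate_le_neg_half_sq {ω : ℕ → ℝ}
    (hθ_symm : ∀ i ∈ Icc 1 n, ∀ j ∈ Icc 1 n, θ i j = θ j i)
    (hθω : ∀ i ∈ Icc 1 n, ∀ j ∈ Icc 1 n, ω i * ω j ≤ θ i j)
    (hω_nonneg : ∀ i ∈ Icc 1 n, 0 ≤ ω i) (hx : ∀ i ∈ Icc 1 n, 0 ≤ x i) :
    ∑ i ∈ Icc 1 n, truncRBKRate θ n x i ≤ -(1 / 2) * (∑ i ∈ Icc 1 n, ω i * x i) ^ 2 := by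
  have hθ_nonneg : ∀ i ∈ Icc 1 n, ∀ j ∈ Icc 1 n, 0 ≤ θ i j := fun i hi j hj =>
    (mul_nonneg (hω_nonneg i hi) (hω_nonneg j hj)).trans (hθω i hi j hj)
  have h_rate := sum_truncRBKRate_add_half_le_zero hθ_symm hθ_nonneg hx
  have h_sq := sq_sum_mul_le_sum_sum hθω hx
  linarith

end Rate

namespace IsTruncRBKOn

variable {θ : ℕ → ℕ → ℝ} {n : ℕ} {I : Set ℝ} {f : ℕ → ℝ → ℝ}

theorem continuousOn (hf : IsTruncRBKOn θ n I f) {i : ℕ} (hi : i ∈ Icc 1 n) :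
    ContinuousOn (f i) I :=
  fun t ht => (hf i hi t ht).continuousWithinAt

theorem hasDerivWithinAt_sum (hf : IsTruncRBKOn θ n I f) {t : ℝ} (ht : t ∈ I) :
    HasDerivWithinAt (fun s => ∑ i ∈ Icc 1 n, f i s)
      (∑ i ∈ Icc 1 n, truncRBKRate θ n (f · t) i) I t :=
  HasDerivWithinAt.fun_sum fun i hi => hf i hi t ht

theorem sum_sub_sum_le_integral (hf : IsTruncRBKOn θ n (Set.Ici 0) f) {φ : ℝ → ℝ}
    (hφ : ContinuousOn φ (Set.Ici 0))
    (h_rate : ∀ s ∈ Set.Ici (0 : ℝ), ∑ i ∈ Icc 1 n, truncRBKRate θ n (f · s) i ≤ φ s)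
    {t : ℝ} (ht : 0 ≤ t) :
    ∑ i ∈ Icc 1 n, f i t - ∑ i ∈ Icc 1 n, f i 0 ≤ ∫ s in (0 : ℝ)..t, φ s := by
  have h_Icc : Set.Icc 0 t ⊆ Set.Ici 0 := Set.Icc_subset_Ici_self
  have h_Ioo : Set.Ioo 0 t ⊆ Set.Ici 0 := Set.Ioo_subset_Icc_self.trans h_Icc
  exact intervalIntegral.sub_le_integral_of_hasDeriv_right_of_le ht
    (fun s hs => (hf.hasDerivWithinAt_sum (h_Icc hs)).continuousWithinAt.mono h_Icc)
    (fun s hs => (hf.hasDerivWithinAt_sum (h_Ioo hs)).mono (Set.Ioi_subset_Ici hs.1.le))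
    (hφ.mono h_Icc).integrableOn_Icc (fun s hs => h_rate s (h_Ioo hs))

end IsTruncRBKOn

theorem truncRBK_zeroth_moment_estimate_general
    (θ : ℕ → ℕ → ℝ) (ω : ℕ → ℝ) (κ : ℕ → ℕ → ℝ)
    (hθ_symm : ∀ i j : ℕ, 1 ≤ i → 1 ≤ j → θ i j = θ j i)
    -- (K1)
    (hK1 : ∀ i j : ℕ, 1 ≤ i → 1 ≤ j → θ i j = ω i * ω j + κ i j)
    (hω_nonneg : ∀ i : ℕ, 1 ≤ i → 0 ≤ ω i)
    (hκ_nonneg : ∀ i j : ℕ, 1 ≤ i → 1 ≤ j → 0 ≤ κ i j)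
    (n : ℕ)
    (fin : ℕ → ℝ)
    (f : ℕ → ℝ → ℝ) (hf : IsTruncRBKOn θ n (Set.Ici 0) f)
    (hinit : ∀ i ∈ Finset.Icc 1 n, f i 0 = fin i)
    (hf_nonneg : ∀ i ∈ Finset.Icc 1 n, ∀ t ∈ Set.Ici (0:ℝ), 0 ≤ f i t)
    (t : ℝ) (ht : 0 ≤ t) :
    ∑ i ∈ Finset.Icc 1 n, f i t
      + (1 / 2) * ∫ s in (0:ℝ)..t, (∑ i ∈ Finset.Icc 1 n, ω i * f i s) ^ 2
      ≤ ∑ i ∈ Finset.Icc 1 n, fin i := by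
  have hθω : ∀ i ∈ Icc 1 n, ∀ j ∈ Icc 1 n, ω i * ω j ≤ θ i j := fun i hi j hj => by
    rw [mem_Icc] at hi hj
    rw [hK1 i j hi.1 hj.1]
    exact le_add_of_nonneg_right (hκ_nonneg i j hi.1 hj.1)
  have h_rate (s : ℝ) (hs : s ∈ Set.Ici (0 : ℝ)) :=
    sum_truncRBKRate_le_neg_half_sq
      (fun i hi j hj => hθ_symm i j (mem_Icc.1 hi).1 (mem_Icc.1 hj).1) hθω
      (fun i hi => hω_nonneg i (mem_Icc.1 hi).1) (fun i hi => hf_nonneg i hi s hs)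
  have h_sq_cont : ContinuousOn (fun s => -(1 / 2) * (∑ i ∈ Icc 1 n, ω i * f i s) ^ 2)
      (Set.Ici 0) :=
    continuousOn_const.mul <|
      (continuousOn_finsetSum _ fun i hi => continuousOn_const.mul (hf.continuousOn hi)).pow 2
  have key := hf.sum_sub_sum_le_integral h_sq_cont h_rate ht
  rw [intervalIntegral.integral_const_mul, sum_congr rfl hinit] at key
  linarith

/-- Under (K1) (`θ_{i,j} = ω_i ω_j + κ_{i,j}` with `ω, κ ≥ 0`, `κ` symmetric),
the nonnegative global solution of the truncated RBK system satisfies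
`∑_{i=1}^n f_i(t) + (1/2) ∫_0^t (∑_{i=1}^n ω_i f_i(s))² ds ≤ ∑_{i=1}^n fin_i`. -/
theorem truncRBK_zeroth_moment_estimate
    (θ : ℕ → ℕ → ℝ) (ω : ℕ → ℝ) (κ : ℕ → ℕ → ℝ)
    (hθ_symm : ∀ i j : ℕ, 1 ≤ i → 1 ≤ j → θ i j = θ j i)
    -- (K1)
    (hK1 : ∀ i j : ℕ, 1 ≤ i → 1 ≤ j → θ i j = ω i * ω j + κ i j)
    (hω_nonneg : ∀ i : ℕ, 1 ≤ i → 0 ≤ ω i)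
    (hκ_nonneg : ∀ i j : ℕ, 1 ≤ i → 1 ≤ j → 0 ≤ κ i j)
    (hκ_symm : ∀ i j : ℕ, 1 ≤ i → 1 ≤ j → κ i j = κ j i)
    (n : ℕ) (hn : 2 ≤ n)
    (fin : ℕ → ℝ) (hfin : ∀ i ∈ Finset.Icc 1 n, 0 ≤ fin i)
    (f : ℕ → ℝ → ℝ) (hf : IsTruncRBKOn θ n (Set.Ici 0) f)
    (hinit : ∀ i ∈ Finset.Icc 1 n, f i 0 = fin i)
    (hf_nonneg : ∀ i ∈ Finset.Icc 1 n, ∀ t ∈ Set.Ici (0:ℝ), 0 ≤ f i t)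
    (t : ℝ) (ht : 0 ≤ t) :
    ∑ i ∈ Finset.Icc 1 n, f i t
      + (1 / 2) * ∫ s in (0:ℝ)..t, (∑ i ∈ Finset.Icc 1 n, ω i * f i s) ^ 2
      ≤ ∑ i ∈ Finset.Icc 1 n, fin i :=
  truncRBK_zeroth_moment_estimate_general θ ω κ hθ_symm hK1 hω_nonneg hκ_nonneg n fin f hf hinit
    hf_nonneg t ht
end
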